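/- arXiv:1712.08333 — 4 statements merged into one kernel-verified Lean document; each statement's English description precedes it below -/
import Mathlib

section
/- For φ(s) = 1/(1 − s) (the Matsumoto function), the regularity inequality φ(s) − s φ'(s) + (b² − s²) φ''(s) > 0 holds for all s with |s| ≤ b if and only if b < 1/2, where 0 ≤ b and |s| ≤ b < 1 is assumed. -/
/-!
On `s < 1` the regularity expression of `φ(s) = 1/(1 - s)` equals `(1 - 3s + 2b²)/(1 - s)³`,
so its sign is that of the numerator. The numerator decreases in `s`, hence its minimum over
`|s| ≤ b` is attained at `s = b`, where it factors as `(1 - b)(1 - 2b)`; for `b < 1` this is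
positive exactly when `b < 1/2`.
-/

lemma hasDerivAt_one_div_one_sub_pow (n : ℕ) {s : ℝ} (hs : s ≠ 1) :
    HasDerivAt (fun x : ℝ => 1 / (1 - x) ^ n) (n / (1 - s) ^ (n + 1)) s := by
  have hne : (1 : ℝ) - s ≠ 0 := sub_ne_zero.mpr hs.symm
  have h := (((hasDerivAt_id s).const_sub 1).pow n).inv (pow_ne_zero n hne)
  simp only [one_div]
  refine h.congr_deriv ?_
  rcases n with _ | n
  · simp
  · simp only [id, Pi.pow_apply, Nat.add_sub_cancel]
    field_simp
    ring

lemma deriv_one_div_one_sub {s : ℝ} (hs : s ≠ 1) :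
    deriv (fun x : ℝ => 1 / (1 - x)) s = 1 / (1 - s) ^ 2 := by
  simpa using (hasDerivAt_one_div_one_sub_pow 1 hs).deriv

lemma deriv_deriv_one_div_one_sub {s : ℝ} (hs : s ≠ 1) :
    deriv (deriv fun x : ℝ => 1 / (1 - x)) s = 2 / (1 - s) ^ 3 := by
  have hev : deriv (fun x : ℝ => 1 / (1 - x)) =ᶠ[nhds s] fun x => 1 / (1 - x) ^ 2 := by
    filter_upwards [isOpen_ne.mem_nhds hs] with x hx
    exact deriv_one_div_one_sub hx
  rw [hev.deriv_eq]
  exact_mod_cast (hasDerivAt_one_div_one_sub_pow 2 hs).deriv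

lemma matsumoto_regularity_eq (b : ℝ) {s : ℝ} (hs : s ≠ 1) :
    1 / (1 - s) - s * deriv (fun x : ℝ => 1 / (1 - x)) s
        + (b ^ 2 - s ^ 2) * deriv (deriv fun x : ℝ => 1 / (1 - x)) s
      = (1 - 3 * s + 2 * b ^ 2) / (1 - s) ^ 3 := by
  have hne : (1 : ℝ) - s ≠ 0 := sub_ne_zero.mpr hs.symm
  rw [deriv_one_div_one_sub hs, deriv_deriv_one_div_one_sub hs]
  field_simp
  ring

lemma matsumoto_regularity_pos_iff (b : ℝ) {s : ℝ} (hs : s < 1) :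
    0 < 1 / (1 - s) - s * deriv (fun x : ℝ => 1 / (1 - x)) s
        + (b ^ 2 - s ^ 2) * deriv (deriv fun x : ℝ => 1 / (1 - x)) s
      ↔ 0 < 1 - 3 * s + 2 * b ^ 2 := by
  rw [matsumoto_regularity_eq b hs.ne]
  exact div_pos_iff_of_pos_right (pow_pos (sub_pos.mpr hs) 3)

theorem stmt6_general (b : ℝ) (hb1 : b < 1)
    (φ : ℝ → ℝ) (hφ : φ = fun s => 1 / (1 - s)) :
    (∀ s : ℝ, |s| ≤ b →
        φ s - s * deriv φ s + (b ^ 2 - s ^ 2) * deriv (deriv φ) s > 0) ↔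
      b < 1 / 2 := by
  subst hφ
  constructor
  · intro H
    by_contra! hb
    have hpos := (matsumoto_regularity_pos_iff b hb1).mp
      (H b (abs_of_nonneg (by linarith)).le)
    nlinarith
  · intro hb s hs
    obtain ⟨-, hsb⟩ := abs_le.mp hs
    refine (matsumoto_regularity_pos_iff b (hsb.trans_lt hb1)).mpr ?_
    nlinarith

/-- For `φ(s) = 1/(1 − s)` with `0 ≤ b < 1`:
the regularity inequality `φ − sφ' + (b² − s²)φ'' > 0` holds for all `|s| ≤ b`
iff `b < 1/2`. -/
theorem stmt6 (b : ℝ) (hb0 : 0 ≤ b) (hb1 : b < 1)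
    (φ : ℝ → ℝ) (hφ : φ = fun s => 1 / (1 - s)) :
    (∀ s : ℝ, |s| ≤ b →
        φ s - s * deriv φ s + (b ^ 2 - s ^ 2) * deriv (deriv φ) s > 0) ↔
      b < 1 / 2 :=
  stmt6_general b hb1 φ hφ
end

section
/- The function φ(s) = 1/(1 − s) does not satisfy any ODE of the form [1 + (k₁ + k₂ s²) s² + k₃ s²] φ''(s) = (k₁ + k₂ s²)(φ(s) − s φ'(s)) on a neighborhood of 0, for any real constants k₁, k₂, k₃; i.e., for every choice of constants k₁, k₂, k₃ there exists s near 0 where the equation fails. -/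
private lemma hd1 (x : ℝ) (hx : 1 - x ≠ 0) :
    HasDerivAt (fun s : ℝ => 1 / (1 - s)) (((1 - x) ^ 2)⁻¹) x := by
  have h : HasDerivAt (fun s : ℝ => 1 - s) (-1) x := by
    simpa using (hasDerivAt_id x).const_sub 1
  have : HasDerivAt (fun s : ℝ => (1 - s)⁻¹) _ x := h.inv hx
  simp only [one_div]
  convert this using 1
  field_simp

private lemma hderiv (x : ℝ) (hx : 1 - x ≠ 0) :
    deriv (fun s : ℝ => 1 / (1 - s)) x = ((1 - x) ^ 2)⁻¹ :=
  (hd1 x hx).deriv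

private lemma hopen : IsOpen {s : ℝ | 1 - s ≠ 0} :=
  isOpen_ne.preimage (continuous_const.sub continuous_id)

private lemma hderiv2 (x : ℝ) (hx : 1 - x ≠ 0) :
    deriv (deriv (fun s : ℝ => 1 / (1 - s))) x = 2 / (1 - x) ^ 3 := by
  have hev : deriv (fun s : ℝ => 1 / (1 - s)) =ᶠ[nhds x] fun s => ((1 - s) ^ 2)⁻¹ := by
    filter_upwards [hopen.mem_nhds hx] with y hy using hderiv y hy
  rw [hev.deriv_eq]
  have h : HasDerivAt (fun s : ℝ => 1 - s) (-1) x := by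
    simpa using (hasDerivAt_id x).const_sub 1
  have h2 : HasDerivAt (fun s : ℝ => (1 - s) ^ 2) (2 * (1 - x) ^ 1 * (-1)) x := h.pow 2
  have h3 : HasDerivAt (fun s : ℝ => ((1 - s) ^ 2)⁻¹) _ x := h2.inv (pow_ne_zero 2 hx)
  rw [h3.deriv]
  field_simp

/-- `φ(s) = 1/(1 − s)` satisfies no Douglas-type ODE
`[1 + (k₁ + k₂s²)s² + k₃s²]φ'' = (k₁ + k₂s²)(φ − sφ')` on any neighborhood of `0`:
for every `k₁, k₂, k₃` and every `ε > 0` there is `s` with `|s| < ε` where it fails. -/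
theorem stmt9 (φ : ℝ → ℝ) (hφ : φ = fun s => 1 / (1 - s)) :
    ∀ k1 k2 k3 : ℝ, ∀ ε : ℝ, 0 < ε → ∃ s : ℝ, |s| < ε ∧
      (1 + (k1 + k2 * s ^ 2) * s ^ 2 + k3 * s ^ 2) * deriv (deriv φ) s ≠
        (k1 + k2 * s ^ 2) * (φ s - s * deriv φ s) := by
  subst hφ
  intro k1 k2 k3 ε hε
  by_cases hk1 : k1 = 2
  · subst hk1
    set C : ℝ := |2 * k3 - k2| + 3 * |k2| with hC
    have hC0 : 0 ≤ C := by positivity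
    set s : ℝ := min (min ε 1) (6 / (C + 1)) / 2 with hs
    have hs0 : 0 < s := by
      apply div_pos _ two_pos
      exact lt_min (lt_min hε (by norm_num)) (by positivity)
    have hsε : s < ε := by
      have : min (min ε 1) (6 / (C + 1)) ≤ ε := le_trans (min_le_left _ _) (min_le_left _ _)
      linarith
    have hs1 : s ≤ 1 / 2 := by
      have : min (min ε 1) (6 / (C + 1)) ≤ 1 := le_trans (min_le_left _ _) (min_le_right _ _)
      linarith
    have hsC : s * (C + 1) < 6 := by
      have h2 : s < 6 / (C + 1) := by
        have h1 : min (min ε 1) (6 / (C + 1)) ≤ 6 / (C + 1) := min_le_right _ _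
        have h3 : 0 < 6 / (C + 1) := by positivity
        rw [hs]; linarith
      calc s * (C + 1) < 6 / (C + 1) * (C + 1) :=
            mul_lt_mul_of_pos_right h2 (by positivity)
        _ = 6 := by field_simp
    have hq : 6 + (2 * k3 - k2) * s + 3 * k2 * s ^ 2 ≠ 0 := by
      intro h
      have hb : |(2 * k3 - k2) * s + 3 * k2 * s ^ 2| ≤ C * s := by
        calc |(2 * k3 - k2) * s + 3 * k2 * s ^ 2|
            ≤ |(2 * k3 - k2) * s| + |3 * k2 * s ^ 2| := abs_add_le _ _
          _ = |2 * k3 - k2| * s + 3 * |k2| * s ^ 2 := by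
              rw [abs_mul, abs_mul, abs_of_pos hs0, abs_of_pos (by positivity : (0:ℝ) < s ^ 2),
                abs_mul, abs_of_pos (by norm_num : (0:ℝ) < 3)]
          _ ≤ |2 * k3 - k2| * s + 3 * |k2| * s := by
              nlinarith [mul_nonneg (abs_nonneg k2)
                (mul_nonneg hs0.le (show (0:ℝ) ≤ 1 - s by linarith))]
          _ = C * s := by rw [hC]; ring
      have h6 : (6 : ℝ) = |(2 * k3 - k2) * s + 3 * k2 * s ^ 2| := by
        rw [show (2 * k3 - k2) * s + 3 * k2 * s ^ 2 = -6 by linarith]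
        norm_num
      nlinarith
    have h1s : 1 - s ≠ 0 := by intro h; rw [sub_eq_zero] at h; linarith
    refine ⟨s, by rw [abs_of_pos hs0]; exact hsε, ?_⟩
    rw [hderiv2 s h1s, hderiv s h1s]
    intro h
    apply hq
    have hsne : s ≠ 0 := ne_of_gt hs0
    have hne : s * (1 - s) ^ 3 ≠ 0 := mul_ne_zero hsne (pow_ne_zero 3 h1s)
    field_simp at h
    have key : (6 + (2 * k3 - k2) * s + 3 * k2 * s ^ 2) * (s * (1 - s) ^ 3) = 0 := by
      linear_combination (1 - s) ^ 3 * h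
    exact (mul_eq_zero.mp key).resolve_right hne
  · refine ⟨0, by simpa using hε, ?_⟩
    rw [hderiv2 0 (by norm_num), hderiv 0 (by norm_num)]
    norm_num
    intro h
    exact hk1 h.symm
end

section
/- Let P : ℝⁿ \ {0} → ℝ be positively homogeneous of degree 1, and suppose that for each i the function y ↦ P(y) y^i is a quadratic form in y (i.e., a homogeneous polynomial of degree 2). If n ≥ 2, then P is a linear form: P(y) = θ_i y^i for some constants θ_i. -/
/-!
Writing `q_i(y) = P(y) y^i`, each quadratic form `q_i` vanishes on the hyperplane `y^i = 0`,
and a quadratic form vanishing on the kernel of a linear form `f` is `f` times a linear form.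
Hence on `{y^i ≠ 0}` the function `P` agrees with a linear form `λ_i`. Any two of these agree on
the dense set `{y^i ≠ 0, y^j ≠ 0}`, so by continuity they are all one linear form `θ`, and every
`y ≠ 0` lies in some `{y^i ≠ 0}`.
-/

lemma LinearMap.exists_apply_self_eq_mul_of_ker {R M : Type*} [CommRing R] [AddCommGroup M]
    [Module R M] (B : M →ₗ[R] M →ₗ[R] R) (f : M →ₗ[R] R) {e : M} (he : f e = 1)
    (hB : ∀ z, f z = 0 → B z z = 0) :
    ∃ l : M →ₗ[R] R, ∀ y, B y y = f y * l y := by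
  refine ⟨B e + B.flip e - B e e • f, fun y => ?_⟩
  have h := hB (y - f y • e) (by simp [he])
  simp only [map_sub, map_smul, LinearMap.sub_apply, LinearMap.smul_apply, smul_eq_mul] at h
  simp only [LinearMap.sub_apply, LinearMap.add_apply, LinearMap.smul_apply, LinearMap.flip_apply,
    smul_eq_mul]
  linear_combination h

lemma dense_setOf_apply_ne_zero_and_apply_ne_zero {ι : Type*} (i j : ι) :
    Dense {y : ι → ℝ | y i ≠ 0 ∧ y j ≠ 0} := by
  have hdense : ∀ k, Dense {y : ι → ℝ | y k ≠ 0} := fun k =>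
    (dense_compl_singleton (0 : ℝ)).preimage (isOpenMap_eval k)
  exact (hdense i).inter_of_isOpen_left (hdense j) (isOpen_ne_fun (continuous_apply i)
    continuous_const)

lemma LinearMap.eq_of_forall_apply_ne_zero {ι : Type*} [Finite ι] {i j : ι}
    {l₁ l₂ : (ι → ℝ) →ₗ[ℝ] ℝ} (h : ∀ y : ι → ℝ, y i ≠ 0 → y j ≠ 0 → l₁ y = l₂ y) : l₁ = l₂ :=
  DFunLike.coe_injective <| Continuous.ext_on (dense_setOf_apply_ne_zero_and_apply_ne_zero i j)
    l₁.continuous_of_finiteDimensional l₂.continuous_of_finiteDimensional fun y hy => h y hy.1 hy.2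

lemma exists_linearMap_eq_of_forall_apply_ne_zero {ι : Type*} [Finite ι] (P : (ι → ℝ) → ℝ)
    (l : ι → (ι → ℝ) →ₗ[ℝ] ℝ) (hl : ∀ i y, y i ≠ 0 → P y = l i y) :
    ∃ ℓ : (ι → ℝ) →ₗ[ℝ] ℝ, ∀ y, y ≠ 0 → P y = ℓ y := by
  rcases isEmpty_or_nonempty ι with hι | ⟨⟨i₀⟩⟩
  · exact ⟨0, fun y hy => absurd (Subsingleton.elim y 0) hy⟩
  refine ⟨l i₀, fun y hy => ?_⟩
  obtain ⟨j, hj⟩ := Function.ne_iff.mp hy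
  have hj₀ : l j = l i₀ := LinearMap.eq_of_forall_apply_ne_zero fun y hyj hyi₀ => by
    rw [← hl j y hyj, ← hl i₀ y hyi₀]
  rw [hl j y hj, hj₀]

lemma exists_linearMap_eq_of_mul_apply_eq_quadratic {ι : Type*} [Fintype ι] [DecidableEq ι]
    (P : (ι → ℝ) → ℝ) (i : ι) (Q : Matrix ι ι ℝ)
    (hQ : ∀ y : ι → ℝ, y ≠ 0 → P y * y i = ∑ j, ∑ k, Q j k * y j * y k) :
    ∃ l : (ι → ℝ) →ₗ[ℝ] ℝ, ∀ y : ι → ℝ, y i ≠ 0 → P y = l y := by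
  set B : (ι → ℝ) →ₗ[ℝ] (ι → ℝ) →ₗ[ℝ] ℝ := Matrix.toLinearMap₂' ℝ Q
  have hPB : ∀ y : ι → ℝ, y ≠ 0 → P y * y i = B y y := fun y hy => by
    simp only [hQ y hy, B, Matrix.toLinearMap₂'_apply, smul_eq_mul]
    exact Finset.sum_congr rfl fun _ _ => Finset.sum_congr rfl fun _ _ => by ring
  have hker : ∀ z : ι → ℝ, z i = 0 → B z z = 0 := fun z hz => by
    rcases eq_or_ne z 0 with rfl | hz₀
    · simp
    · rw [← hPB z hz₀, hz, mul_zero]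
  obtain ⟨l, hl⟩ := B.exists_apply_self_eq_mul_of_ker (LinearMap.proj i) (e := Pi.single i 1)
    (by simp) hker
  refine ⟨l, fun y hy => mul_left_cancel₀ hy ?_⟩
  rw [mul_comm, hPB y (ne_of_apply_ne (· i) hy), hl, LinearMap.proj_apply]

theorem stmt13_general (n : ℕ) (P : (Fin n → ℝ) → ℝ)
    (hquad : ∀ i : Fin n, ∃ Q : Matrix (Fin n) (Fin n) ℝ,
      ∀ y : Fin n → ℝ, y ≠ 0 → P y * y i = ∑ j, ∑ k, Q j k * y j * y k) :
    ∃ θ : Fin n → ℝ, ∀ y : Fin n → ℝ, y ≠ 0 → P y = ∑ i, θ i * y i := by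
  choose Q hQ using hquad
  choose l hl using fun i => exists_linearMap_eq_of_mul_apply_eq_quadratic P i (Q i) (hQ i)
  obtain ⟨ℓ, hℓ⟩ := exists_linearMap_eq_of_forall_apply_ne_zero P l hl
  refine ⟨fun i => ℓ fun j => if i = j then 1 else 0, fun y hy => ?_⟩
  rw [hℓ y hy, ℓ.pi_apply_eq_sum_univ]
  simp only [smul_eq_mul, mul_comm (y _)]

/-- If `P` is positively 1-homogeneous on `ℝⁿ \ {0}` (`n ≥ 2`) and each
`y ↦ P(y)y^i` is a quadratic form, then `P` is a linear form `θ_iy^i`. -/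
theorem stmt13 (n : ℕ) (hn : 2 ≤ n) (P : (Fin n → ℝ) → ℝ)
    (hhom : ∀ c : ℝ, 0 < c → ∀ y : Fin n → ℝ, y ≠ 0 → P (c • y) = c * P y)
    (hquad : ∀ i : Fin n, ∃ Q : Matrix (Fin n) (Fin n) ℝ,
      ∀ y : Fin n → ℝ, y ≠ 0 → P y * y i = ∑ j, ∑ k, Q j k * y j * y k) :
    ∃ θ : Fin n → ℝ, ∀ y : Fin n → ℝ, y ≠ 0 → P y = ∑ i, θ i * y i :=
  stmt13_general n P hquad
end

section
/- Suppose F, F̄ : ℝⁿ\{0} → ℝ are smooth 1-homogeneous, their sprays satisfy G^i = Ḡ^i + P y^i, F̄'s Berwald tensor satisfies B̄^i_{jkl} = c̄ (F̄_{y^jy^k} δ^i_l + F̄_{y^ky^l} δ^i_j + F̄_{y^jy^l} δ^i_k + F̄_{y^jy^ky^l} y^i), and the mean Berwald relation c F_{y^iy^j} = c̄ F̄_{y^iy^j} + P_{y^iy^j} holds for scalars c, c̄. Then B^i_{jkl} = c (F_{y^jy^k} δ^i_l + F_{y^ky^l} δ^i_j + F_{y^jy^l} δ^i_k + F_{y^jy^ky^l}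 y^i), i.e., F has isotropic Berwald curvature. -/
/-- Partial derivative in the `j`-th fiber direction. -/
noncomputable def pd {n : ℕ} (j : Fin n) (f : (Fin n → ℝ) → ℝ) :
    (Fin n → ℝ) → ℝ :=
  fun y => fderiv ℝ f y (Pi.single j 1)

section helpers

open Topology

variable {n : ℕ}

lemma pd_congr_on {s : Set (Fin n → ℝ)} (hs : IsOpen s) {f g : (Fin n → ℝ) → ℝ}
    (h : ∀ x ∈ s, f x = g x) (j : Fin n) {y : Fin n → ℝ} (hy : y ∈ s) :
    pd j f y = pd j g y := by
  unfold pd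
  rw [Filter.EventuallyEq.fderiv_eq (Filter.eventually_of_mem (hs.mem_nhds hy) h)]

lemma pd_smooth {s : Set (Fin n → ℝ)} (hs : IsOpen s) {f : (Fin n → ℝ) → ℝ}
    (hf : ContDiffOn ℝ (⊤ : ℕ∞) f s) (j : Fin n) : ContDiffOn ℝ (⊤ : ℕ∞) (pd j f) s := by
  have h : ContDiffOn ℝ (⊤ : ℕ∞) (fun x => fderiv ℝ f x) s :=
    hf.fderiv_of_isOpen hs (by simp)
  exact h.clm_apply contDiffOn_const

lemma diffAt_of_contDiffOn {s : Set (Fin n → ℝ)} (hs : IsOpen s)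
    {f : (Fin n → ℝ) → ℝ} (hf : ContDiffOn ℝ (⊤ : ℕ∞) f s) {y : Fin n → ℝ} (hy : y ∈ s) :
    DifferentiableAt ℝ f y :=
  (hf.differentiableOn (by simp)).differentiableAt (hs.mem_nhds hy)

lemma pd_add {f g : (Fin n → ℝ) → ℝ} {y : Fin n → ℝ}
    (hf : DifferentiableAt ℝ f y) (hg : DifferentiableAt ℝ g y) (j : Fin n) :
    pd j (fun z => f z + g z) y = pd j f y + pd j g y := by
  unfold pd
  rw [fderiv_fun_add hf hg]
  simp

lemma pd_const_mul {f : (Fin n → ℝ) → ℝ} {y : Fin n → ℝ}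
    (hf : DifferentiableAt ℝ f y) (a : ℝ) (j : Fin n) :
    pd j (fun z => a * f z) y = a * pd j f y := by
  unfold pd
  rw [fderiv_const_mul hf a]
  simp

lemma pd_mul_const {f : (Fin n → ℝ) → ℝ} {y : Fin n → ℝ}
    (hf : DifferentiableAt ℝ f y) (a : ℝ) (j : Fin n) :
    pd j (fun z => f z * a) y = pd j f y * a := by
  unfold pd
  rw [fderiv_mul_const hf a]
  simp [mul_comm]

lemma diffAt_coord (i : Fin n) (y : Fin n → ℝ) :
    DifferentiableAt ℝ (fun z : Fin n → ℝ => z i) y :=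
  (ContinuousLinearMap.proj i : (Fin n → ℝ) →L[ℝ] ℝ).differentiableAt

lemma pd_mul_coord {f : (Fin n → ℝ) → ℝ} {y : Fin n → ℝ}
    (hf : DifferentiableAt ℝ f y) (i l : Fin n) :
    pd l (fun z => f z * z i) y = pd l f y * y i + f y * (if i = l then 1 else 0) := by
  unfold pd
  rw [fderiv_fun_mul hf (diffAt_coord i y)]
  have hco : fderiv ℝ (fun z : Fin n → ℝ => z i) y
      = (ContinuousLinearMap.proj i : (Fin n → ℝ) →L[ℝ] ℝ) :=
    (ContinuousLinearMap.proj i : (Fin n → ℝ) →L[ℝ] ℝ).fderiv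
  rw [hco]
  simp only [ContinuousLinearMap.add_apply, ContinuousLinearMap.smul_apply,
    ContinuousLinearMap.proj_apply, Pi.single_apply, smul_eq_mul]
  ring_nf

lemma contDiffOn_coord {s : Set (Fin n → ℝ)} (i : Fin n) :
    ContDiffOn ℝ (⊤ : ℕ∞) (fun z : Fin n → ℝ => z i) s :=
  ((ContinuousLinearMap.proj i : (Fin n → ℝ) →L[ℝ] ℝ).contDiff).contDiffOn

end helpers

/-- If `G = Ḡ + P y`, `F̄` has isotropic Berwald curvature with factor `c̄`,
and the mean Berwald relation `cF_{y^iy^j} = c̄F̄_{y^iy^j} + P_{y^iy^j}` holds,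
then `F` has isotropic Berwald curvature with factor `c`. -/
theorem stmt16 (n : ℕ) (F Fb : (Fin n → ℝ) → ℝ)
    (hF : ContDiffOn ℝ (⊤ : ℕ∞) F {y | y ≠ 0})
    (hFb : ContDiffOn ℝ (⊤ : ℕ∞) Fb {y | y ≠ 0})
    (hFhom : ∀ c : ℝ, 0 < c → ∀ y, F (c • y) = c * F y)
    (hFbhom : ∀ c : ℝ, 0 < c → ∀ y, Fb (c • y) = c * Fb y)
    (G Gb : (Fin n → ℝ) → Fin n → ℝ) (P : (Fin n → ℝ) → ℝ)
    (hGb : ∀ i, ContDiffOn ℝ (⊤ : ℕ∞) (fun y => Gb y i) {y | y ≠ 0})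
    (hP : ContDiffOn ℝ (⊤ : ℕ∞) P {y | y ≠ 0})
    (hspray : ∀ y i, G y i = Gb y i + P y * y i)
    (c cb : ℝ)
    (hBb : ∀ (i j k l : Fin n) (y : Fin n → ℝ), y ≠ 0 →
      pd j (pd k (pd l (fun z => Gb z i))) y =
        cb * (pd j (pd k Fb) y * (if i = l then 1 else 0)
          + pd k (pd l Fb) y * (if i = j then 1 else 0)
          + pd j (pd l Fb) y * (if i = k then 1 else 0)
          + pd j (pd k (pd l Fb)) y * y i))
    (hmean : ∀ (i j : Fin n) (y : Fin n → ℝ), y ≠ 0 →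
      c * pd i (pd j F) y = cb * pd i (pd j Fb) y + pd i (pd j P) y) :
    ∀ (i j k l : Fin n) (y : Fin n → ℝ), y ≠ 0 →
      pd j (pd k (pd l (fun z => G z i))) y =
        c * (pd j (pd k F) y * (if i = l then 1 else 0)
          + pd k (pd l F) y * (if i = j then 1 else 0)
          + pd j (pd l F) y * (if i = k then 1 else 0)
          + pd j (pd k (pd l F)) y * y i) := by
  intro i j k l y hy
  set s : Set (Fin n → ℝ) := {y | y ≠ 0} with hsdef
  have hs : IsOpen s := isOpen_ne
  have hys : y ∈ s := hy
  -- abbreviations for deltas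
  set dil : ℝ := if i = l then 1 else 0 with hdil
  set dik : ℝ := if i = k then 1 else 0 with hdik
  set dij : ℝ := if i = j then 1 else 0 with hdij
  -- smoothness bookkeeping
  have hQ : ContDiffOn ℝ (⊤ : ℕ∞) (fun z => P z * z i) s := hP.mul (contDiffOn_coord i)
  have hPl := pd_smooth hs hP l
  have hPk := pd_smooth hs hP k
  have hPkl := pd_smooth hs hPl k
  have hGbl := pd_smooth hs (hGb i) l
  have hGbkl := pd_smooth hs hGbl k
  have hQl := pd_smooth hs hQ l
  have hQkl := pd_smooth hs hQl k
  -- first derivative of Q := P * coord i, on s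
  have hQ1 : ∀ z ∈ s, pd l (fun w => P w * w i) z
      = pd l P z * z i + P z * dil := fun z hz =>
    pd_mul_coord (diffAt_of_contDiffOn hs hP hz) i l
  -- second derivative of Q, on s
  have hR1 : ContDiffOn ℝ (⊤ : ℕ∞) (fun z => pd l P z * z i) s := hPl.mul (contDiffOn_coord i)
  have hR2 : ContDiffOn ℝ (⊤ : ℕ∞) (fun z => P z * dil) s := hP.mul contDiffOn_const
  have hQ2 : ∀ z ∈ s, pd k (pd l (fun w => P w * w i)) z
      = pd k (pd l P) z * z i + pd l P z * dik + pd k P z * dil := by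
    intro z hz
    rw [pd_congr_on hs hQ1 k hz,
      pd_add (diffAt_of_contDiffOn hs hR1 hz) (diffAt_of_contDiffOn hs hR2 hz),
      pd_mul_coord (diffAt_of_contDiffOn hs hPl hz) i k,
      pd_mul_const (diffAt_of_contDiffOn hs hP hz) dil k]
    try ring
  -- third derivative of Q at y
  have hS1 : ContDiffOn ℝ (⊤ : ℕ∞) (fun z => pd k (pd l P) z * z i) s :=
    hPkl.mul (contDiffOn_coord i)
  have hS2 : ContDiffOn ℝ (⊤ : ℕ∞) (fun z => pd l P z * dik) s := hPl.mul contDiffOn_const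
  have hS3 : ContDiffOn ℝ (⊤ : ℕ∞) (fun z => pd k P z * dil) s := hPk.mul contDiffOn_const
  have hS12 : ContDiffOn ℝ (⊤ : ℕ∞) (fun z => pd k (pd l P) z * z i + pd l P z * dik) s :=
    hS1.add hS2
  have hQ3 : pd j (pd k (pd l (fun w => P w * w i))) y
      = pd j (pd k (pd l P)) y * y i + pd k (pd l P) y * dij
        + pd j (pd l P) y * dik + pd j (pd k P) y * dil := by
    have he : ∀ z ∈ s, pd k (pd l (fun w => P w * w i)) z
        = (fun w => pd k (pd l P) w * w i + pd l P w * dik) z + pd k P z * dil := by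
      intro z hz; rw [hQ2 z hz]
    rw [pd_congr_on hs he j hys,
      pd_add (diffAt_of_contDiffOn hs hS12 hys) (diffAt_of_contDiffOn hs hS3 hys),
      pd_add (diffAt_of_contDiffOn hs hS1 hys) (diffAt_of_contDiffOn hs hS2 hys),
      pd_mul_coord (diffAt_of_contDiffOn hs hPkl hys) i j,
      pd_mul_const (diffAt_of_contDiffOn hs hPl hys) dik j,
      pd_mul_const (diffAt_of_contDiffOn hs hPk hys) dil j]
    try ring
  -- split G into Gb + Q
  have hGfun : (fun z => G z i) = fun z => Gb z i + P z * z i :=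
    funext fun z => hspray z i
  have hsplit1 : ∀ z ∈ s, pd l (fun w => G w i) z
      = pd l (fun w => Gb w i) z + pd l (fun w => P w * w i) z := by
    intro z hz
    rw [hGfun]
    exact pd_add (diffAt_of_contDiffOn hs (hGb i) hz) (diffAt_of_contDiffOn hs hQ hz) l
  have hsplit2 : ∀ z ∈ s, pd k (pd l (fun w => G w i)) z
      = pd k (pd l (fun w => Gb w i)) z + pd k (pd l (fun w => P w * w i)) z := by
    intro z hz
    rw [pd_congr_on hs hsplit1 k hz]
    exact pd_add (diffAt_of_contDiffOn hs hGbl hz) (diffAt_of_contDiffOn hs hQl hz) k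
  have hsplit3 : pd j (pd k (pd l (fun w => G w i))) y
      = pd j (pd k (pd l (fun w => Gb w i))) y
        + pd j (pd k (pd l (fun w => P w * w i))) y := by
    rw [pd_congr_on hs hsplit2 j hys]
    exact pd_add (diffAt_of_contDiffOn hs hGbkl hys) (diffAt_of_contDiffOn hs hQkl hys) j
  -- third-order mean relation: differentiate hmean k l in direction j
  have hFkl := pd_smooth hs (pd_smooth hs hF l) k
  have hFbkl := pd_smooth hs (pd_smooth hs hFb l) k
  have h4 : c * pd j (pd k (pd l F)) y
      = cb * pd j (pd k (pd l Fb)) y + pd j (pd k (pd l P)) y := by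
    have he : ∀ z ∈ s, (fun w => c * pd k (pd l F) w) z
        = (fun w => cb * pd k (pd l Fb) w) z + pd k (pd l P) z := by
      intro z hz; exact hmean k l z hz
    have hL : pd j (fun w => c * pd k (pd l F) w) y
        = pd j (fun w => cb * pd k (pd l Fb) w + pd k (pd l P) w) y :=
      pd_congr_on hs he j hys
    rw [pd_const_mul (diffAt_of_contDiffOn hs hFkl hys) c j] at hL
    rw [pd_add ((diffAt_of_contDiffOn hs hFbkl hys).const_mul cb)
      (diffAt_of_contDiffOn hs hPkl hys) j,
      pd_const_mul (diffAt_of_contDiffOn hs hFbkl hys) cb j] at hL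
    exact hL
  have h1 := hmean j k y hy
  have h2 := hmean k l y hy
  have h3 := hmean j l y hy
  rw [hsplit3, hBb i j k l y hy, hQ3]
  rw [← hdil, ← hdik, ← hdij] at *
  linear_combination (-dil) * h1 - dij * h2 - dik * h3 - y i * h4
end
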